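/- arXiv:math/0605676 — 7 statements merged into one kernel-verified Lean document; each statement's English description precedes it below -/
import Mathlib

section
/- Let X = X_1 ∪ ... ∪ X_n be a finite union of open affinoids in the projective line over a complete ultrametric field. For each x ∈ X, the union Y of all open affinoids containing x and contained in X is an open affinoid. Moreover, these 'components' are pairwise disjoint or equal, and there are only finitely many of them. -/
/-- An open ball of the projective line `P^1_K = OnePoint K`: either a ball of `K`
which is open as a subset for the ultrametric (an open ball `{|z - a| < r}`, which also
covers irrational balls, i.e. those whose radius is not a value of the absolute value),
or the complement in `P^1_K` of a closed (or irrational) ball of `K`. -/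
def IsOpenBallP1 {K : Type*} [NormedField K] (B : Set (OnePoint K)) : Prop :=
  (∃ (a : K) (r : ℝ), 0 < r ∧ B = OnePoint.some '' Metric.ball a r) ∨
  (∃ (a : K) (r : ℝ), 0 < r ∧ B = (OnePoint.some '' Metric.closedBall a r)ᶜ)

/-- An open affinoid of `P^1_K`: a finite intersection of open balls of `P^1_K`
(the empty intersection being all of `P^1_K`). -/
def IsOpenAffinoid {K : Type*} [NormedField K] (A : Set (OnePoint K)) : Prop :=
  ∃ (n : ℕ) (Bs : Fin n → Set (OnePoint K)),
    (∀ i, IsOpenBallP1 (Bs i)) ∧ A = ⋂ i, Bs i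

/-- The component of `X` containing `x`: the union of all open affinoids containing `x`
and contained in `X`. -/
def component {K : Type*} [NormedField K] (X : Set (OnePoint K)) (x : OnePoint K) :
    Set (OnePoint K) :=
  ⋃₀ {A | IsOpenAffinoid A ∧ x ∈ A ∧ A ⊆ X}

open Set Metric OnePoint IsUltrametricDist

namespace P1Aux

set_option linter.unusedSectionVars false
set_option linter.unusedVariables false

variable {K : Type*} [NormedField K] [IsUltrametricDist K]

lemma some_inj : Function.Injective (OnePoint.some : K → OnePoint K) :=
  Option.some_injective K

lemma affinoid_univ : IsOpenAffinoid (Set.univ : Set (OnePoint K)) :=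
  ⟨0, fun i => i.elim0, fun i => i.elim0, (Set.iInter_of_empty _).symm⟩

lemma ball_affinoid {B : Set (OnePoint K)} (h : IsOpenBallP1 B) : IsOpenAffinoid B :=
  ⟨1, fun _ => B, fun _ => h, (Set.iInter_const B).symm⟩

lemma affinoid_empty : IsOpenAffinoid (∅ : Set (OnePoint K)) := by
  refine ⟨2, fun i => if i = 0 then OnePoint.some '' Metric.ball 0 1
    else (OnePoint.some '' Metric.closedBall 0 1)ᶜ, fun i => ?_, ?_⟩
  · by_cases h : i = 0
    · simp only [h, if_pos]
      exact Or.inl ⟨0, 1, one_pos, rfl⟩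
    · simp only [h, if_neg, if_false]
      exact Or.inr ⟨0, 1, one_pos, rfl⟩
  · ext z
    simp only [Set.mem_empty_iff_false, Set.mem_iInter, false_iff, not_forall]
    by_cases hz : z ∈ OnePoint.some '' Metric.ball 0 1
    · refine ⟨1, ?_⟩
      simp only [show (1 : Fin 2) ≠ 0 by decide, if_false, Set.mem_compl_iff, not_not]
      obtain ⟨c, hc, rfl⟩ := hz
      exact ⟨c, Metric.ball_subset_closedBall hc, rfl⟩
    · exact ⟨0, by simpa using hz⟩

lemma affinoid_inter {A A' : Set (OnePoint K)} (hA : IsOpenAffinoid A)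
    (hA' : IsOpenAffinoid A') : IsOpenAffinoid (A ∩ A') := by
  obtain ⟨n, Bs, hBs, rfl⟩ := hA
  obtain ⟨m, Bs', hBs', rfl⟩ := hA'
  refine ⟨n + m, Fin.append Bs Bs', fun i => ?_, ?_⟩
  · refine Fin.addCases (fun i => ?_) (fun i => ?_) i
    · rw [Fin.append_left]; exact hBs i
    · rw [Fin.append_right]; exact hBs' i
  · ext z
    simp only [Set.mem_inter_iff, Set.mem_iInter]
    constructor
    · rintro ⟨h1, h2⟩ k
      refine Fin.addCases (fun i => ?_) (fun i => ?_) k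
      · rw [Fin.append_left]; exact h1 i
      · rw [Fin.append_right]; exact h2 i
    · intro h
      refine ⟨fun i => ?_, fun j => ?_⟩
      · have := h (Fin.castAdd m i); rwa [Fin.append_left] at this
      · have := h (Fin.natAdd n j); rwa [Fin.append_right] at this

lemma affinoid_iInter : ∀ {m : ℕ} (A : Fin m → Set (OnePoint K)),
    (∀ i, IsOpenAffinoid (A i)) → IsOpenAffinoid (⋂ i, A i) := by
  intro m
  induction m with
  | zero => intro A _; rw [Set.iInter_of_empty]; exact affinoid_univ
  | succ m ih =>
    intro A hA
    have : (⋂ i, A i) = A 0 ∩ ⋂ i : Fin m, A i.succ := by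
      ext z; simp [Set.mem_iInter, Fin.forall_fin_succ]
    rw [this]
    exact affinoid_inter (hA 0) (ih _ fun i => hA i.succ)


/-- mixed case: a ball of K and a complement of a closed ball -/
lemma ball_union_mixed {a b : K} {r s : ℝ} (hr : 0 < r) (hs : 0 < s)
    (hne : ((OnePoint.some '' Metric.ball a r) ∩ (OnePoint.some '' Metric.closedBall b s)ᶜ).Nonempty) :
    IsOpenAffinoid ((OnePoint.some '' Metric.ball a r) ∪ (OnePoint.some '' Metric.closedBall b s)ᶜ) := by
  obtain ⟨w, hwB, hwB'⟩ := hne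
  obtain ⟨z, hz, rfl⟩ := hwB
  have hzb : z ∉ Metric.closedBall b s := fun h => hwB' ⟨z, h, rfl⟩
  by_cases hd : (Metric.ball a r ∩ Metric.closedBall b s).Nonempty
  · obtain ⟨x, hx1, hx2⟩ := hd
    -- closedBall b s ⊆ ball a r
    have hzx : dist z x < r :=
      lt_of_le_of_lt (_root_.dist_triangle_max z a x)
        (max_lt (Metric.mem_ball.mp hz) (by rw [dist_comm]; exact Metric.mem_ball.mp hx1))
    have hxb : dist x b ≤ s := Metric.mem_closedBall.mp hx2
    have hsz : s < dist z b := not_le.mp (fun h => hzb (Metric.mem_closedBall.mpr h))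
    have hs_lt : s < r := by
      have h1 : dist z b ≤ max (dist z x) (dist x b) := _root_.dist_triangle_max z x b
      have h2 : s < dist z x := by
        by_contra h
        push_neg at h
        exact absurd (h1.trans (max_le h hxb)) (not_le.mpr hsz)
      exact h2.trans hzx
    have hkey : Metric.closedBall b s ⊆ Metric.ball a r := by
      intro w hw
      have hwx : dist w x ≤ s :=
        le_trans (_root_.dist_triangle_max w b x)
          (max_le (Metric.mem_closedBall.mp hw) (by rw [dist_comm]; exact hxb))
      have : dist w a ≤ max (dist w x) (dist x a) := _root_.dist_triangle_max w x a
      exact Metric.mem_ball.mpr (this.trans_lt (max_lt (hwx.trans_lt hs_lt)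
        (Metric.mem_ball.mp hx1)))
    have : (OnePoint.some '' Metric.ball a r) ∪ (OnePoint.some '' Metric.closedBall b s)ᶜ = Set.univ := by
      ext p
      simp only [Set.mem_univ, iff_true, Set.mem_union, Set.mem_compl_iff]
      by_cases hp : p ∈ OnePoint.some '' Metric.closedBall b s
      · obtain ⟨c, hc, rfl⟩ := hp
        exact Or.inl ⟨c, hkey hc, rfl⟩
      · exact Or.inr hp
    rw [this]; exact affinoid_univ
  · have : (OnePoint.some '' Metric.ball a r) ∪ (OnePoint.some '' Metric.closedBall b s)ᶜ
        = (OnePoint.some '' Metric.closedBall b s)ᶜ := by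
      apply Set.union_eq_right.mpr
      rintro _ ⟨c, hc, rfl⟩ ⟨c', hc', hcc⟩
      exact hd ⟨c, hc, by rwa [some_inj hcc] at hc'⟩
    rw [this]
    exact ball_affinoid (Or.inr ⟨b, s, hs, rfl⟩)

lemma ball_union {B B' : Set (OnePoint K)} (hB : IsOpenBallP1 B) (hB' : IsOpenBallP1 B')
    (hne : (B ∩ B').Nonempty) : IsOpenAffinoid (B ∪ B') := by
  rcases hB with ⟨a, r, hr, rfl⟩ | ⟨a, r, hr, rfl⟩ <;>
    rcases hB' with ⟨b, s, hs, rfl⟩ | ⟨b, s, hs, rfl⟩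
  · -- two balls of K
    obtain ⟨w, hw1, hw2⟩ := hne
    obtain ⟨c, hc, rfl⟩ := hw1
    obtain ⟨c', hc', hcc⟩ := hw2
    rw [some_inj hcc] at hc'
    have h1 : Metric.ball a r = Metric.ball c r := ball_eq_of_mem hc
    have h2 : Metric.ball b s = Metric.ball c s := ball_eq_of_mem hc'
    have : Metric.ball c r ∪ Metric.ball c s = Metric.ball c (max r s) := by
      ext w; simp [Metric.mem_ball, lt_max_iff]
    rw [h1, h2, ← Set.image_union, this]
    exact ball_affinoid (Or.inl ⟨c, max r s, lt_max_of_lt_left hr, rfl⟩)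
  · exact ball_union_mixed hr hs hne
  · rw [Set.union_comm]
    exact ball_union_mixed hs hr (Set.inter_comm _ _ ▸ hne)
  · -- two complements of closed balls
    by_cases hd : (Metric.closedBall a r ∩ Metric.closedBall b s).Nonempty
    · obtain ⟨x, hx1, hx2⟩ := hd
      have h1 : Metric.closedBall a r = Metric.closedBall x r := closedBall_eq_of_mem hx1
      have h2 : Metric.closedBall b s = Metric.closedBall x s := closedBall_eq_of_mem hx2
      have h3 : Metric.closedBall x r ∩ Metric.closedBall x s = Metric.closedBall x (min r s) := by
        ext w; simp [Metric.mem_closedBall, le_min_iff]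
      rw [← Set.compl_inter, ← Set.image_inter some_inj, h1, h2, h3]
      exact ball_affinoid (Or.inr ⟨x, min r s, lt_min hr hs, rfl⟩)
    · have : (OnePoint.some '' Metric.closedBall a r)ᶜ ∪ (OnePoint.some '' Metric.closedBall b s)ᶜ
          = Set.univ := by
        ext p
        simp only [Set.mem_univ, iff_true, Set.mem_union, Set.mem_compl_iff]
        by_cases hp : p ∈ OnePoint.some '' Metric.closedBall a r
        · obtain ⟨c, hc, rfl⟩ := hp
          exact Or.inr fun ⟨c', hc', hcc⟩ => hd ⟨c, hc, by rwa [some_inj hcc] at hc'⟩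
        · exact Or.inl hp
      rw [this]; exact affinoid_univ

lemma affinoid_union {A A' : Set (OnePoint K)} (hA : IsOpenAffinoid A)
    (hA' : IsOpenAffinoid A') (hne : (A ∩ A').Nonempty) : IsOpenAffinoid (A ∪ A') := by
  obtain ⟨p, hpA, hpA'⟩ := hne
  obtain ⟨n, Bs, hBs, rfl⟩ := hA
  obtain ⟨m, Bs', hBs', rfl⟩ := hA'
  have : (⋂ i, Bs i) ∪ (⋂ j, Bs' j) = ⋂ i, ⋂ j, (Bs i ∪ Bs' j) := by
    rw [Set.iInter_union]
    exact Set.iInter_congr fun i => Set.union_iInter _ _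
  rw [this]
  refine affinoid_iInter _ fun i => affinoid_iInter _ fun j => ?_
  exact ball_union (hBs i) (hBs' j)
    ⟨p, Set.mem_iInter.mp hpA i, Set.mem_iInter.mp hpA' j⟩

lemma affinoid_biUnion {x : OnePoint K} : ∀ {m : ℕ} (g : Fin m → Set (OnePoint K)),
    (∀ i, IsOpenAffinoid (g i) ∧ (g i = ∅ ∨ x ∈ g i)) →
    IsOpenAffinoid (⋃ i, g i) ∧ ((⋃ i, g i) = ∅ ∨ x ∈ ⋃ i, g i) := by
  intro m
  induction m with
  | zero =>
    intro g _
    rw [Set.iUnion_of_empty]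
    exact ⟨affinoid_empty, Or.inl rfl⟩
  | succ m ih =>
    intro g hg
    have hsplit : (⋃ i, g i) = g 0 ∪ ⋃ i : Fin m, g i.succ := by
      ext z; simp [Fin.exists_fin_succ]
    obtain ⟨ih1, ih2⟩ := ih (fun i => g i.succ) (fun i => hg i.succ)
    rcases (hg 0).2 with h0 | h0
    · rw [hsplit, h0, Set.empty_union]
      exact ⟨ih1, ih2⟩
    · rcases ih2 with hrest | hrest
      · rw [hsplit, hrest, Set.union_empty]
        exact ⟨(hg 0).1, Or.inr h0⟩
      · rw [hsplit]
        refine ⟨affinoid_union (hg 0).1 ih1 ⟨x, h0, hrest⟩, Or.inr (Set.mem_union_left _ h0)⟩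

end P1Aux

open P1Aux

/-- Let `X = X_1 ∪ ... ∪ X_n` be a finite union of open affinoids in the projective line
over a complete algebraically closed ultrametric field (with nontrivial absolute value).
For each `x ∈ X`, the union `Y` of all open affinoids containing `x` and contained in `X`
is an open affinoid; these components are pairwise disjoint or equal, and there are only
finitely many of them. -/
theorem stmt4 {K : Type*} [NormedField K] [CompleteSpace K] [IsUltrametricDist K]
    [IsAlgClosed K] (hnt : ∃ x : K, x ≠ 0 ∧ ‖x‖ ≠ 1)
    (n : ℕ) (Xs : Fin n → Set (OnePoint K)) (hXs : ∀ i, IsOpenAffinoid (Xs i)) :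
    (∀ x ∈ ⋃ i, Xs i, IsOpenAffinoid (component (⋃ i, Xs i) x)) ∧
    (∀ x ∈ ⋃ i, Xs i, ∀ y ∈ ⋃ i, Xs i,
      component (⋃ i, Xs i) x = component (⋃ i, Xs i) y ∨
        Disjoint (component (⋃ i, Xs i) x) (component (⋃ i, Xs i) y)) ∧
    {C : Set (OnePoint K) | ∃ x ∈ ⋃ i, Xs i, C = component (⋃ i, Xs i) x}.Finite := by
  classical
  set X : Set (OnePoint K) := ⋃ i, Xs i with hX
  -- basic facts about components
  have hsub : ∀ x : OnePoint K, component X x ⊆ X :=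
    fun x => Set.sUnion_subset fun A hA => hA.2.2
  have hA_sub : ∀ (x : OnePoint K) (A : Set (OnePoint K)),
      IsOpenAffinoid A → x ∈ A → A ⊆ X → A ⊆ component X x :=
    fun x A hA hxA hAX => Set.subset_sUnion_of_mem ⟨hA, hxA, hAX⟩
  -- if Xs i meets the component of x, then Xs i is contained in it
  have hXs_sub : ∀ (x : OnePoint K) (i : Fin n), (Xs i ∩ component X x).Nonempty →
      Xs i ⊆ component X x := by
    intro x i ⟨y, hyX, hyC⟩
    obtain ⟨A, ⟨hAaff, hAx, hAX⟩, hyA⟩ := hyC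
    have haff : IsOpenAffinoid (Xs i ∪ A) := affinoid_union (hXs i) hAaff ⟨y, hyX, hyA⟩
    have := hA_sub x (Xs i ∪ A) haff (Or.inr hAx)
      (Set.union_subset (Set.subset_iUnion Xs i) hAX)
    exact fun z hz => this (Or.inl hz)
  -- representation of the component as a union over indices
  have hrep : ∀ x ∈ X, component X x = ⋃ i ∈ {i : Fin n | (Xs i ∩ component X x).Nonempty}, Xs i := by
    intro x hx
    apply Set.Subset.antisymm
    · intro z hz
      obtain ⟨i, hzi⟩ := Set.mem_iUnion.mp (hsub x hz)
      exact Set.mem_biUnion ⟨z, hzi, hz⟩ hzi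
    · exact Set.iUnion₂_subset fun i hi => hXs_sub x i hi
  refine ⟨?_, ?_, ?_⟩
  · -- each component is an open affinoid
    intro x hx
    have hex : ∀ i : Fin n, ∃ g : Set (OnePoint K),
        (IsOpenAffinoid g ∧ (g = ∅ ∨ x ∈ g)) ∧ g ⊆ component X x ∧
        ∀ z ∈ Xs i ∩ component X x, z ∈ g := by
      intro i
      by_cases h : (Xs i ∩ component X x).Nonempty
      · obtain ⟨y, hyX, hyC⟩ := h
        obtain ⟨A, ⟨hAaff, hAx, hAX⟩, hyA⟩ := hyC
        refine ⟨Xs i ∪ A, ⟨affinoid_union (hXs i) hAaff ⟨y, hyX, hyA⟩, Or.inr (Or.inr hAx)⟩,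
          ?_, fun z hz => Or.inl hz.1⟩
        exact hA_sub x _ (affinoid_union (hXs i) hAaff ⟨y, hyX, hyA⟩) (Or.inr hAx)
          (Set.union_subset (Set.subset_iUnion Xs i) hAX)
      · exact ⟨∅, ⟨affinoid_empty, Or.inl rfl⟩, Set.empty_subset _,
          fun z hz => absurd ⟨z, hz⟩ h⟩
    choose g hg using hex
    have hcomp_eq : component X x = ⋃ i, g i := by
      apply Set.Subset.antisymm
      · intro z hz
        obtain ⟨i, hzi⟩ := Set.mem_iUnion.mp (hsub x hz)
        exact Set.mem_iUnion.mpr ⟨i, (hg i).2.2 z ⟨hzi, hz⟩⟩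
      · exact Set.iUnion_subset fun i => (hg i).2.1
    rw [hcomp_eq]
    exact (affinoid_biUnion g fun i => (hg i).1).1
  · -- disjoint or equal
    have key : ∀ u v : OnePoint K, (component X u ∩ component X v).Nonempty →
        component X u ⊆ component X v := by
      intro u v ⟨z, hzu, hzv⟩
      obtain ⟨A, ⟨hAaff, hAu, hAX⟩, hzA⟩ := hzu
      obtain ⟨B, ⟨hBaff, hBv, hBX⟩, hzB⟩ := hzv
      have hABaff : IsOpenAffinoid (A ∪ B) := affinoid_union hAaff hBaff ⟨z, hzA, hzB⟩
      apply Set.sUnion_subset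
      rintro C ⟨hCaff, hCu, hCX⟩
      have haff : IsOpenAffinoid (C ∪ (A ∪ B)) :=
        affinoid_union hCaff hABaff ⟨u, hCu, Or.inl hAu⟩
      have hCs : C ∪ (A ∪ B) ⊆ component X v :=
        hA_sub v _ haff (Or.inr (Or.inr hBv)) (Set.union_subset hCX (Set.union_subset hAX hBX))
      exact fun w hw => hCs (Or.inl hw)
    intro x hx y hy
    rcases Set.eq_empty_or_nonempty (component X x ∩ component X y) with h | h
    · exact Or.inr (Set.disjoint_iff_inter_eq_empty.mpr h)
    · exact Or.inl (Set.Subset.antisymm (key x y h) (key y x (Set.inter_comm _ _ ▸ h)))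
  · -- finiteness
    have : {C : Set (OnePoint K) | ∃ x ∈ X, C = component X x} ⊆
        (fun T : Set (Fin n) => ⋃ i ∈ T, Xs i) '' Set.univ := by
      rintro C ⟨x, hx, rfl⟩
      exact ⟨{i : Fin n | (Xs i ∩ component X x).Nonempty}, Set.mem_univ _, (hrep x hx).symm⟩
    exact Set.Finite.subset (Set.Finite.image _ Set.finite_univ) this
end

section
/- Let X be a topological space and B a collection of open subsets of X satisfying: (B_I) every nonempty finite intersection of elements of B belongs to B; (B_II) for every finite cover C of X by elements of B there exists a finite cover C' by elements of B such that for each point x of X, the union of elements of C' containing x is contained in some element of C. Then the collection U of all subsets V of X × X containing some set of the form V(C) = ⋃_{Y ∈ C} Y × Y, where C is a finite cover of X by elements of B, is a uniform structure (uniformity) on X. -/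
/-- `C` is a finite cover of `X` by elements of `B`. -/
def IsCover {X : Type*} (B : Set (Set X)) (C : Finset (Set X)) : Prop :=
  ↑C ⊆ B ∧ ⋃₀ (↑C : Set (Set X)) = Set.univ

/-- The entourage `V(C) = ⋃_{Y ∈ C} Y × Y` associated to a finite cover `C`. -/
def coverEnt {X : Type*} (C : Finset (Set X)) : Set (X × X) :=
  ⋃ Y ∈ C, Y ×ˢ Y

/-- Let `X` be a topological space and `B` a collection of open subsets of `X` satisfying
(B_I): every nonempty finite intersection of elements of `B` belongs to `B`, and
(B_II): every finite cover `C` of `X` by elements of `B` admits a finite cover `C'` by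
elements of `B` such that for each `x ∈ X` the union of the elements of `C'` containing
`x` is contained in some element of `C`.  Then the collection `U` of all subsets of
`X × X` containing some `V(C) = ⋃_{Y ∈ C} Y × Y`, with `C` a finite cover of `X` by
elements of `B`, is a uniform structure on `X`. -/
theorem stmt6 {X : Type*} (t : TopologicalSpace X) (B : Set (Set X))
    (hBopen : ∀ Y ∈ B, @IsOpen X t Y)
    (hBI : ∀ S : Finset (Set X), S.Nonempty → ↑S ⊆ B →
      (⋂₀ (↑S : Set (Set X))).Nonempty → ⋂₀ (↑S : Set (Set X)) ∈ B)
    (hBII : ∀ C : Finset (Set X), IsCover B C → ∃ C' : Finset (Set X), IsCover B C' ∧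
      ∀ x : X, ∃ Z ∈ C, ⋃₀ {Y | Y ∈ C' ∧ x ∈ Y} ⊆ Z)
    (hcov : ∃ C : Finset (Set X), IsCover B C) :
    ∃ core : UniformSpace.Core X,
      core.uniformity.sets =
        {V : Set (X × X) | ∃ C : Finset (Set X), IsCover B C ∧ coverEnt C ⊆ V} := by
  classical
  set S : Set (Set (X × X)) := {V | ∃ C : Finset (Set X), IsCover B C ∧ coverEnt C ⊆ V}
    with hS
  obtain ⟨C₀, hC₀⟩ := hcov
  have huniv : Set.univ ∈ S := ⟨C₀, hC₀, Set.subset_univ _⟩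
  have hmono : ∀ ⦃V W : Set (X × X)⦄, V ∈ S → V ⊆ W → W ∈ S := by
    rintro V W ⟨C, hC, h⟩ hVW; exact ⟨C, hC, h.trans hVW⟩
  have hinter : ∀ ⦃V W : Set (X × X)⦄, V ∈ S → W ∈ S → V ∩ W ∈ S := by
    rintro V W ⟨C₁, hC₁, h₁⟩ ⟨C₂, hC₂, h₂⟩
    refine ⟨(C₁ ×ˢ C₂).filter (fun p => (p.1 ∩ p.2).Nonempty)
      |>.image (fun p => p.1 ∩ p.2), ⟨?_, ?_⟩, ?_⟩
    · intro Y hY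
      simp only [Finset.coe_image, Set.mem_image, Finset.mem_coe, Finset.mem_filter,
        Finset.mem_product] at hY
      obtain ⟨⟨Y₁, Y₂⟩, ⟨⟨hY₁, hY₂⟩, hne⟩, rfl⟩ := hY
      have := hBI {Y₁, Y₂} (by simp) ?_ ?_
      · simpa using this
      · intro Z hZ
        simp only [Finset.coe_insert, Finset.coe_singleton, Set.mem_insert_iff,
          Set.mem_singleton_iff] at hZ
        rcases hZ with rfl | rfl
        · exact hC₁.1 hY₁
        · exact hC₂.1 hY₂
      · simpa using hne
    · ext x
      simp only [Set.mem_sUnion, Set.mem_univ, iff_true, Finset.coe_image,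
        Set.mem_image, Finset.mem_coe, Finset.mem_filter, Finset.mem_product]
      obtain ⟨Y₁, hY₁, hx₁⟩ : ∃ Y₁ ∈ (C₁ : Set (Set X)), x ∈ Y₁ := by
        have := hC₁.2 ▸ Set.mem_univ x; exact Set.mem_sUnion.1 (hC₁.2.symm ▸ Set.mem_univ x)
      obtain ⟨Y₂, hY₂, hx₂⟩ : ∃ Y₂ ∈ (C₂ : Set (Set X)), x ∈ Y₂ :=
        Set.mem_sUnion.1 (hC₂.2.symm ▸ Set.mem_univ x)
      exact ⟨Y₁ ∩ Y₂, ⟨⟨Y₁, Y₂⟩, ⟨⟨hY₁, hY₂⟩, ⟨x, hx₁, hx₂⟩⟩, rfl⟩, hx₁, hx₂⟩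
    · intro p hp
      simp only [coverEnt, Set.mem_iUnion, Finset.mem_image, Finset.mem_filter,
        Finset.mem_product] at hp
      obtain ⟨Y, ⟨⟨Y₁, Y₂⟩, ⟨⟨hY₁, hY₂⟩, _⟩, rfl⟩, hpY⟩ := hp
      obtain ⟨hp1, hp2⟩ := hpY
      constructor
      · exact h₁ (by simp only [coverEnt, Set.mem_iUnion]; exact ⟨Y₁, hY₁, hp1.1, hp2.1⟩)
      · exact h₂ (by simp only [coverEnt, Set.mem_iUnion]; exact ⟨Y₂, hY₂, hp1.2, hp2.2⟩)
  let F : Filter (X × X) :=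
    { sets := S
      univ_sets := huniv
      sets_of_superset := fun h h' => hmono h h'
      inter_sets := fun h h' => hinter h h' }
  have hFsets : F.sets = S := rfl
  refine ⟨UniformSpace.Core.mk' F ?_ ?_ ?_, rfl⟩
  · rintro r ⟨C, hC, h⟩ x
    obtain ⟨Y, hY, hx⟩ := Set.mem_sUnion.1 (hC.2.symm ▸ Set.mem_univ x)
    exact h (by simp only [coverEnt, Set.mem_iUnion]; exact ⟨Y, hY, hx, hx⟩)
  · rintro r ⟨C, hC, h⟩
    refine ⟨C, hC, ?_⟩
    intro p hp
    simp only [coverEnt, Set.mem_iUnion] at hp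
    obtain ⟨Y, hY, h1, h2⟩ := hp
    exact h (by simp only [coverEnt, Set.mem_iUnion]; exact ⟨Y, hY, h2, h1⟩)
  · rintro r ⟨C, hC, h⟩
    obtain ⟨C', hC', hC'C⟩ := hBII C hC
    refine ⟨coverEnt C', ⟨C', hC', subset_rfl⟩, ?_⟩
    rintro ⟨x, z⟩ ⟨y, hxy, hyz⟩
    simp only [coverEnt, Set.mem_iUnion] at hxy hyz
    obtain ⟨Y₁, hY₁, hx, hy₁⟩ := hxy
    obtain ⟨Y₂, hY₂, hy₂, hz⟩ := hyz
    obtain ⟨Z, hZ, hsub⟩ := hC'C y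
    refine h (by
      simp only [coverEnt, Set.mem_iUnion]
      exact ⟨Z, hZ, hsub ⟨Y₁, ⟨hY₁, hy₁⟩, hx⟩, hsub ⟨Y₂, ⟨hY₂, hy₂⟩, hz⟩⟩)
end

section
/- With X a topological space, B a collection of open sets satisfying (B_I) and (B_II), and U the induced uniformity of finite covers, the topology on X induced by U is coarser than the original topology; the two topologies coincide if and only if B satisfies: for every x ∈ X and every neighborhood Y of x, there exists a finite cover C of X by elements of B such that the union of elements of C containing x is contained in Y. -/
/-- `V(C)(x)`: the union of the elements of the cover `C` containing `x`. -/
def coverNbhd {X : Type*} (C : Finset (Set X)) (x : X) : Set X :=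
  ⋃₀ {Y | Y ∈ C ∧ x ∈ Y}

/-- The neighborhood filter of `x` for the uniformity of finite covers: generated by
the sets `V(C)(x)` as `C` runs over the finite covers of `X` by elements of `B`. -/
def coverNhds {X : Type*} (B : Set (Set X)) (x : X) : Filter X :=
  Filter.generate {S | ∃ C : Finset (Set X), IsCover B C ∧ S = coverNbhd C x}

/-! The sets `V(C)(x)` form a basis of `coverNhds B x` because any two covers have a common
refinement by pairwise intersections (B_I); by (B_II) each `V(C)(x)` contains `V(C')(x)` for a
cover `C'` with `V(C')(y) ⊆ V(C)(x)` for all `y ∈ V(C')(x)`, so these filters are the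
neighborhood filters of a topology. Its basic neighborhoods `V(C)(x)` are open in the original
topology, and (B_III) says precisely that they form a basis of the original neighborhoods. -/

open Filter Set

section Covers

variable {X : Type*} {B : Set (Set X)}

lemma mem_coverNbhd_iff {C : Finset (Set X)} {x y : X} :
    y ∈ coverNbhd C x ↔ ∃ Y ∈ C, x ∈ Y ∧ y ∈ Y := by
  simp [coverNbhd, and_assoc]

lemma mem_coverNbhd_comm {C : Finset (Set X)} {x y : X} :
    y ∈ coverNbhd C x ↔ x ∈ coverNbhd C y := by
  simp only [mem_coverNbhd_iff, and_comm (a := x ∈ _)]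

lemma IsCover.mem_coverNbhd_self {C : Finset (Set X)} (hC : IsCover B C) (x : X) :
    x ∈ coverNbhd C x := by
  obtain ⟨Y, hY, hxY⟩ := mem_sUnion.1 (hC.2.symm ▸ mem_univ x)
  exact mem_coverNbhd_iff.2 ⟨Y, hY, hxY, hxY⟩

lemma IsCover.isOpen_coverNbhd [TopologicalSpace X] (hB : ∀ Y ∈ B, IsOpen Y)
    {C : Finset (Set X)} (hC : IsCover B C) (x : X) : IsOpen (coverNbhd C x) :=
  isOpen_sUnion fun Y hY => hB Y (hC.1 hY.1)

lemma inter_mem_of_forall_sInter_mem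
    (hBI : ∀ S : Finset (Set X), S.Nonempty → ↑S ⊆ B →
      (⋂₀ (↑S : Set (Set X))).Nonempty → ⋂₀ (↑S : Set (Set X)) ∈ B)
    {Y₁ Y₂ : Set X} (h₁ : Y₁ ∈ B) (h₂ : Y₂ ∈ B) (hne : (Y₁ ∩ Y₂).Nonempty) :
    Y₁ ∩ Y₂ ∈ B := by
  classical
  simpa using hBI {Y₁, Y₂} (by simp) (by simp [insert_subset_iff, h₁, h₂]) (by simpa using hne)

lemma IsCover.exists_coverNbhd_subset_inter
    (hB : ∀ Y₁ ∈ B, ∀ Y₂ ∈ B, (Y₁ ∩ Y₂).Nonempty → Y₁ ∩ Y₂ ∈ B)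
    {C₁ C₂ : Finset (Set X)} (h₁ : IsCover B C₁) (h₂ : IsCover B C₂) :
    ∃ C, IsCover B C ∧ ∀ x, coverNbhd C x ⊆ coverNbhd C₁ x ∩ coverNbhd C₂ x := by
  classical
  have mem_C {Y : Set X} : Y ∈ (Finset.image₂ (· ∩ ·) C₁ C₂).filter Set.Nonempty ↔
      ∃ Y₁ ∈ C₁, ∃ Y₂ ∈ C₂, Y₁ ∩ Y₂ = Y ∧ Y.Nonempty := by
    simp only [Finset.mem_filter, Finset.mem_image₂]
    grind
  refine ⟨(Finset.image₂ (· ∩ ·) C₁ C₂).filter Set.Nonempty, ⟨fun Y hY => ?_, ?_⟩, ?_⟩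
  · obtain ⟨Y₁, hY₁, Y₂, hY₂, rfl, hne⟩ := mem_C.1 hY
    exact hB _ (h₁.1 hY₁) _ (h₂.1 hY₂) hne
  · refine eq_univ_of_forall fun z => ?_
    obtain ⟨Y₁, hY₁, -, hz₁⟩ := mem_coverNbhd_iff.1 (h₁.mem_coverNbhd_self z)
    obtain ⟨Y₂, hY₂, -, hz₂⟩ := mem_coverNbhd_iff.1 (h₂.mem_coverNbhd_self z)
    exact ⟨Y₁ ∩ Y₂, mem_C.2 ⟨Y₁, hY₁, Y₂, hY₂, rfl, z, hz₁, hz₂⟩, hz₁, hz₂⟩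
  · intro x y hy
    obtain ⟨Y, hY, hxY, hyY⟩ := mem_coverNbhd_iff.1 hy
    obtain ⟨Y₁, hY₁, Y₂, hY₂, rfl, -⟩ := mem_C.1 hY
    exact ⟨mem_coverNbhd_iff.2 ⟨Y₁, hY₁, hxY.1, hyY.1⟩,
      mem_coverNbhd_iff.2 ⟨Y₂, hY₂, hxY.2, hyY.2⟩⟩

lemma coverNhds_hasBasis (hB : ∀ Y₁ ∈ B, ∀ Y₂ ∈ B, (Y₁ ∩ Y₂).Nonempty → Y₁ ∩ Y₂ ∈ B)
    (hcov : ∃ C, IsCover B C) (x : X) :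
    (coverNhds B x).HasBasis (IsCover B) (coverNbhd · x) := by
  have hgen : {S | ∃ C, IsCover B C ∧ S = coverNbhd C x} = (coverNbhd · x) '' {C | IsCover B C} := by
    ext S; simp [eq_comm]
  rw [coverNhds, generate_eq_biInf, hgen, iInf_image]
  refine hasBasis_biInf_principal (fun C₁ h₁ C₂ h₂ => ?_) hcov
  obtain ⟨C, hC, hsub⟩ := h₁.exists_coverNbhd_subset_inter hB h₂
  exact ⟨C, hC, (hsub x).trans inter_subset_left, (hsub x).trans inter_subset_right⟩

lemma coverNbhd_subset_of_mem_coverNbhd {C C' : Finset (Set X)}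
    (hC' : ∀ y, ∃ Z ∈ C, coverNbhd C' y ⊆ Z) {x y : X} (hy : y ∈ coverNbhd C' x) :
    coverNbhd C' y ⊆ coverNbhd C x := by
  obtain ⟨Z, hZ, hsub⟩ := hC' y
  exact hsub.trans (subset_sUnion_of_mem ⟨hZ, hsub (mem_coverNbhd_comm.1 hy)⟩)

lemma nhds_mkOfNhds_coverNhds
    (hB : ∀ Y₁ ∈ B, ∀ Y₂ ∈ B, (Y₁ ∩ Y₂).Nonempty → Y₁ ∩ Y₂ ∈ B)
    (hBII : ∀ C, IsCover B C → ∃ C', IsCover B C' ∧ ∀ x, ∃ Z ∈ C, coverNbhd C' x ⊆ Z)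
    (hcov : ∃ C, IsCover B C) (x : X) :
    @nhds X (TopologicalSpace.mkOfNhds (coverNhds B)) x = coverNhds B x := by
  have hbasis := coverNhds_hasBasis hB hcov
  refine TopologicalSpace.nhds_mkOfNhds _ x
    (fun y => (hbasis y).ge_iff.2 fun C hC => hC.mem_coverNbhd_self y) fun y s hs => ?_
  obtain ⟨C, hC, hCs⟩ := (hbasis y).mem_iff.1 hs
  obtain ⟨C', hC', href⟩ := hBII C hC
  filter_upwards [(hbasis y).mem_of_mem hC'] with z hz
  exact (hbasis z).mem_iff.2 ⟨C', hC', (coverNbhd_subset_of_mem_coverNbhd href hz).trans hCs⟩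

end Covers

/-- With `X` a topological space, `B` a collection of open sets satisfying (B_I) and
(B_II) (and admitting at least one finite cover), the topology on `X` induced by the
uniformity of finite covers is coarser than the original topology `t`; the two
topologies coincide if and only if `B` satisfies (B_III): for every `x ∈ X` and every
neighborhood `Y` of `x`, there is a finite cover `C` of `X` by elements of `B` such
that the union of the elements of `C` containing `x` is contained in `Y`. -/
theorem stmt7 {X : Type*} (t : TopologicalSpace X) (B : Set (Set X))
    (hBopen : ∀ Y ∈ B, @IsOpen X t Y)
    (hBI : ∀ S : Finset (Set X), S.Nonempty → ↑S ⊆ B →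
      (⋂₀ (↑S : Set (Set X))).Nonempty → ⋂₀ (↑S : Set (Set X)) ∈ B)
    (hBII : ∀ C : Finset (Set X), IsCover B C → ∃ C' : Finset (Set X), IsCover B C' ∧
      ∀ x : X, ∃ Z ∈ C, coverNbhd C' x ⊆ Z)
    (hcov : ∃ C : Finset (Set X), IsCover B C) :
    t ≤ TopologicalSpace.mkOfNhds (coverNhds B) ∧
    (TopologicalSpace.mkOfNhds (coverNhds B) = t ↔
      ∀ x : X, ∀ Y ∈ @nhds X t x, ∃ C : Finset (Set X), IsCover B C ∧ coverNbhd C x ⊆ Y) := by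
  let _ : TopologicalSpace X := t
  have hB : ∀ Y₁ ∈ B, ∀ Y₂ ∈ B, (Y₁ ∩ Y₂).Nonempty → Y₁ ∩ Y₂ ∈ B :=
    fun _ h₁ _ h₂ => inter_mem_of_forall_sInter_mem hBI h₁ h₂
  have hnhds := nhds_mkOfNhds_coverNhds hB hBII hcov
  have hbasis := coverNhds_hasBasis hB hcov
  have hle : t ≤ TopologicalSpace.mkOfNhds (coverNhds B) := (le_iff_nhds _ _).2 fun x => by
    rw [hnhds]
    exact (hbasis x).ge_iff.2 fun C hC =>
      (hC.isOpen_coverNbhd hBopen x).mem_nhds (hC.mem_coverNbhd_self x)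
  refine ⟨hle, ?_⟩
  rw [le_antisymm_iff, and_iff_left hle, le_iff_nhds]
  simp only [hnhds, (hbasis _).le_iff]
end

section
/- Let X be an ultrametric space endowed with the uniformity of finite covers by a family B satisfying (B_I) and (B_II). A filter F on X is Cauchy if and only if F contains at least one element of every finite cover of X by elements of B. -/
/-- Let `X` carry the uniformity of finite covers by a family `B` of open sets
satisfying (B_I) and (B_II) (entourages: the supersets of the sets `V(C)`).  A (proper)
filter `F` on `X` is Cauchy — i.e. contains a `V`-small set for every entourage `V` —
if and only if `F` contains at least one element of every finite cover of `X` by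
elements of `B`. -/
theorem stmt8 {X : Type*} (t : TopologicalSpace X) (B : Set (Set X))
    (hBopen : ∀ Y ∈ B, @IsOpen X t Y)
    (hBI : ∀ S : Finset (Set X), S.Nonempty → ↑S ⊆ B →
      (⋂₀ (↑S : Set (Set X))).Nonempty → ⋂₀ (↑S : Set (Set X)) ∈ B)
    (hBII : ∀ C : Finset (Set X), IsCover B C → ∃ C' : Finset (Set X), IsCover B C' ∧
      ∀ x : X, ∃ Z ∈ C, ⋃₀ {Y | Y ∈ C' ∧ x ∈ Y} ⊆ Z)
    (F : Filter X) [F.NeBot] :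
    (∀ V : Set (X × X), (∃ C : Finset (Set X), IsCover B C ∧ coverEnt C ⊆ V) →
        ∃ Y ∈ F, Y ×ˢ Y ⊆ V) ↔
    (∀ C : Finset (Set X), IsCover B C → ∃ Y ∈ C, Y ∈ F) := by
  constructor
  · intro h C hC
    obtain ⟨C', hC', hstar⟩ := hBII C hC
    obtain ⟨Y, hYF, hYsmall⟩ := h (coverEnt C') ⟨C', hC', subset_rfl⟩
    have hYne : Y.Nonempty := F.nonempty_of_mem hYF
    obtain ⟨x, hx⟩ := hYne
    obtain ⟨Z, hZC, hsub⟩ := hstar x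
    refine ⟨Z, hZC, F.mem_of_superset hYF ?_⟩
    intro y hy
    have : (x, y) ∈ coverEnt C' := hYsmall ⟨hx, hy⟩
    simp only [coverEnt, Set.mem_iUnion, Set.mem_prod] at this
    obtain ⟨W, hW, hxW, hyW⟩ := this
    exact hsub ⟨W, ⟨hW, hxW⟩, hyW⟩
  · intro h V ⟨C, hC, hCV⟩
    obtain ⟨Y, hYC, hYF⟩ := h C hC
    refine ⟨Y, hYF, fun p hp => hCV ?_⟩
    exact Set.mem_iUnion₂.2 ⟨Y, hYC, hp⟩
end

section
/- Let X carry the uniformity of finite covers by B satisfying (B_I) and (B_II), and let X̂ be its Hausdorff completion (the space of minimal Cauchy filters). Then X̂ is compact. -/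
/-- Let `X` carry the uniformity of finite covers by a family `B` of open sets
satisfying (B_I) and (B_II) (the entourages are exactly the supersets of the sets
`V(C)` for finite covers `C` by elements of `B`).  Then the Hausdorff completion
`X̂` of `X` is compact. -/
theorem stmt9 {X : Type*} (t : TopologicalSpace X) (B : Set (Set X))
    (hBopen : ∀ Y ∈ B, @IsOpen X t Y)
    (hBI : ∀ S : Finset (Set X), S.Nonempty → ↑S ⊆ B →
      (⋂₀ (↑S : Set (Set X))).Nonempty → ⋂₀ (↑S : Set (Set X)) ∈ B)
    (hBII : ∀ C : Finset (Set X), IsCover B C → ∃ C' : Finset (Set X), IsCover B C' ∧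
      ∀ x : X, ∃ Z ∈ C, ⋃₀ {Y | Y ∈ C' ∧ x ∈ Y} ⊆ Z)
    (hcov : ∃ C : Finset (Set X), IsCover B C)
    [u : UniformSpace X]
    (hu : ∀ V : Set (X × X),
      V ∈ uniformity X ↔ ∃ C : Finset (Set X), IsCover B C ∧ coverEnt C ⊆ V) :
    CompactSpace (UniformSpace.Completion X) := by
  classical
  -- X is totally bounded
  have htb : TotallyBounded (Set.univ : Set X) := by
    rcases isEmpty_or_nonempty X with hX | hX
    · simp [Set.univ_eq_empty_iff.mpr hX, totallyBounded_empty]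
    intro V hV
    obtain ⟨C, hC, hCV⟩ := (hu V).1 hV
    set f : Set X → X := fun Y => if h : Y.Nonempty then h.some else hX.some with hf
    refine ⟨f '' ↑C, (C.finite_toSet).image f, ?_⟩
    intro x _
    have hx : x ∈ ⋃₀ (↑C : Set (Set X)) := hC.2 ▸ Set.mem_univ x
    obtain ⟨Y, hYC, hxY⟩ := hx
    have hYne : Y.Nonempty := ⟨x, hxY⟩
    refine Set.mem_iUnion.2 ⟨f Y, Set.mem_iUnion.2 ⟨⟨Y, hYC, rfl⟩, ?_⟩⟩
    have hfY : f Y ∈ Y := by simp [hf, dif_pos hYne, hYne.some_mem]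
    exact hCV (Set.mem_iUnion₂.2 ⟨Y, hYC, ⟨hxY, hfY⟩⟩)
  have h2 : TotallyBounded (Set.range ((↑) : X → UniformSpace.Completion X)) := by
    rw [← Set.image_univ]
    exact htb.image (UniformSpace.Completion.uniformContinuous_coe X)
  have h3 : TotallyBounded (Set.univ : Set (UniformSpace.Completion X)) := by
    rw [← (UniformSpace.Completion.denseRange_coe (α := X)).closure_eq]
    exact h2.closure
  exact isCompact_univ_iff.mp
    (isCompact_iff_totallyBounded_isComplete.mpr ⟨h3, completeSpace_iff_isComplete_univ.mp inferInstance⟩)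
end

section
/- With X̂ the completion of X as above, and for Y ⊆ X define Ŷ = {F ∈ X̂ : Y ∈ F}. If Y and Y' are complementary subsets of X, then Ŷ and the closure of Y' in X̂ are complementary subsets of X̂; in particular Ŷ is open in X̂. Moreover the collection {Ŷ : Y ∈ B} is a basis of the topology of X̂. -/
/-- A Cauchy filter for the uniformity of finite covers by elements of `B`:
a proper filter containing a `V(C)`-small set for every finite cover `C`. -/
def CauchyB {X : Type*} (B : Set (Set X)) (F : Filter X) : Prop :=
  F.NeBot ∧ ∀ C : Finset (Set X), IsCover B C → ∃ Y ∈ F, Y ×ˢ Y ⊆ coverEnt C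

/-- A minimal Cauchy filter: a Cauchy filter such that any coarser Cauchy filter
equals it (in Mathlib's order, `F ≤ G` means `F` is finer than `G`). -/
def MinCauchyB {X : Type*} (B : Set (Set X)) (F : Filter X) : Prop :=
  CauchyB B F ∧ ∀ G : Filter X, CauchyB B G → F ≤ G → G = F

/-- The Hausdorff completion `X̂`: the set of minimal Cauchy filters. -/
def Xhat {X : Type*} (B : Set (Set X)) : Type _ :=
  {F : Filter X // MinCauchyB B F}

/-- For `Y ⊆ X`, the subset `Ŷ = {F ∈ X̂ : Y ∈ F}` of the completion. -/
def hatSet {X : Type*} (B : Set (Set X)) (Y : Set X) : Set (Xhat B) :=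
  {F | Y ∈ F.1}

/-- The neighborhood filter of a point `F` of `X̂`, generated by the sets
`V̂(C)(F) = {F' : F and F' contain a common V(C)-small element}`. -/
def hatNhds {X : Type*} (B : Set (Set X)) (F : Xhat B) : Filter (Xhat B) :=
  Filter.generate {S | ∃ C : Finset (Set X), IsCover B C ∧
    S = {F' : Xhat B | ∃ Y : Set X, Y ∈ F.1 ∧ Y ∈ F'.1 ∧ Y ×ˢ Y ⊆ coverEnt C}}

/-- The topology of the completion `X̂`. -/
def hatTop {X : Type*} (B : Set (Set X)) : TopologicalSpace (Xhat B) :=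
  TopologicalSpace.mkOfNhds (hatNhds B)

/-- The image in `X̂` of a subset `Y'` of `X`: the minimal Cauchy filters coarser than
the neighborhood filter of some point of `Y'`. -/
def hatImg {X : Type*} (t : TopologicalSpace X) (B : Set (Set X)) (Y' : Set X) :
    Set (Xhat B) :=
  {F | ∃ x ∈ Y', @nhds X t x ≤ F.1}

/-! The minimal Cauchy filter coarser than a Cauchy filter `H` is generated by the sets
`V(C)[A]` with `A ∈ H`: (B_II) provides star refinements, which make this filter Cauchy and
coarser than every Cauchy filter meeting `H`, and (B_I) makes the covers directed. So if
`Y ∈ F` for a minimal `F`, some `V(C)[A] ⊆ Y` with `A ∈ F`, and `V̂(C')(F) ⊆ Ŷ` for a star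
refinement `C'` of `C`. Conversely, if every element of `F` meets `Y'`, a point `x ∈ Y'` of a
small element of `F` gives the minimal Cauchy filter coarser than `𝓝 x`, which lies in the
image of `Y'` and in any prescribed `V̂(C)(F)`. Finally `V̂(C)(F)` contains `Ẑ` for a member
`Z ∈ C` with `Z ∈ F`, so the sets `Ŷ`, `Y ∈ B`, form a basis. -/

section

open Filter Set Topology

variable {X : Type*} {B : Set (Set X)}

def StarRefines (C' C : Finset (Set X)) : Prop :=
  ∀ x : X, ∃ Z ∈ C, ⋃₀ {Y | Y ∈ C' ∧ x ∈ Y} ⊆ Z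

variable (hBI : ∀ S : Finset (Set X), S.Nonempty → ↑S ⊆ B →
      (⋂₀ (↑S : Set (Set X))).Nonempty → ⋂₀ (↑S : Set (Set X)) ∈ B)
  (hBII : ∀ C : Finset (Set X), IsCover B C → ∃ C', IsCover B C' ∧ StarRefines C' C)
  (hcov : ∃ C : Finset (Set X), IsCover B C)

lemma mem_coverEnt {C : Finset (Set X)} {a b : X} :
    (a, b) ∈ coverEnt C ↔ ∃ W ∈ C, a ∈ W ∧ b ∈ W := by
  simp only [coverEnt, mem_iUnion, mem_prod, exists_prop]

lemma prod_self_subset_coverEnt {C : Finset (Set X)} {Z : Set X} (hZ : Z ∈ C) :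
    Z ×ˢ Z ⊆ coverEnt C :=
  fun _ hp => mem_coverEnt.2 ⟨Z, hZ, hp⟩

lemma coverEnt_symm {C : Finset (Set X)} {a b : X} (h : (a, b) ∈ coverEnt C) :
    (b, a) ∈ coverEnt C :=
  let ⟨W, hW, ha, hb⟩ := mem_coverEnt.1 h
  mem_coverEnt.2 ⟨W, hW, hb, ha⟩

lemma IsCover.exists_mem {C : Finset (Set X)} (hC : IsCover B C) (x : X) :
    ∃ W ∈ C, x ∈ W := by
  simpa [← hC.2] using mem_univ x

lemma IsCover.subset_image_coverEnt {C : Finset (Set X)} (hC : IsCover B C) (A : Set X) :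
    A ⊆ SetRel.image (coverEnt C) A := fun x hx =>
  let ⟨W, hW, hxW⟩ := hC.exists_mem x
  ⟨x, hx, mem_coverEnt.2 ⟨W, hW, hxW, hxW⟩⟩

include hBI in
lemma IsCover.exists_coverEnt_subset_inter {C₁ C₂ : Finset (Set X)} (h₁ : IsCover B C₁)
    (h₂ : IsCover B C₂) :
    ∃ C, IsCover B C ∧ coverEnt C ⊆ coverEnt C₁ ∩ coverEnt C₂ := by
  classical
  refine ⟨((C₁ ×ˢ C₂).image fun p => p.1 ∩ p.2).filter Set.Nonempty, ⟨?_, ?_⟩, ?_⟩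
  · simp only [Finset.coe_filter, Finset.mem_image, Finset.mem_product]
    rintro _ ⟨⟨⟨W₁, W₂⟩, ⟨hW₁, hW₂⟩, rfl⟩, hne⟩
    have hpair : ↑({W₁, W₂} : Finset (Set X)) ⊆ B := by
      simp [insert_subset_iff, h₁.1 hW₁, h₂.1 hW₂]
    simpa using hBI {W₁, W₂} (by simp) hpair (by simpa using hne)
  · refine eq_univ_of_forall fun x => ?_
    obtain ⟨W₁, hW₁, hx₁⟩ := h₁.exists_mem x
    obtain ⟨W₂, hW₂, hx₂⟩ := h₂.exists_mem x
    simp only [Finset.coe_filter, Finset.mem_image, Finset.mem_product, mem_sUnion]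
    exact ⟨W₁ ∩ W₂, ⟨⟨⟨W₁, W₂⟩, ⟨hW₁, hW₂⟩, rfl⟩, x, hx₁, hx₂⟩, hx₁, hx₂⟩
  · rintro ⟨a, b⟩ hab
    obtain ⟨W, hW, ha, hb⟩ := mem_coverEnt.1 hab
    simp only [Finset.mem_filter, Finset.mem_image, Finset.mem_product] at hW
    obtain ⟨⟨⟨W₁, W₂⟩, ⟨hW₁, hW₂⟩, rfl⟩, -⟩ := hW
    exact ⟨mem_coverEnt.2 ⟨W₁, hW₁, ha.1, hb.1⟩, mem_coverEnt.2 ⟨W₂, hW₂, ha.2, hb.2⟩⟩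

namespace StarRefines

variable {C'' C' C : Finset (Set X)}

lemma exists_subset_of_prod_self_subset (h : StarRefines C' C) {S : Set X}
    (hS : S ×ˢ S ⊆ coverEnt C') {x : X} (hx : x ∈ S) : ∃ Z ∈ C, S ⊆ Z := by
  obtain ⟨Z, hZC, hZ⟩ := h x
  refine ⟨Z, hZC, fun y hy => ?_⟩
  obtain ⟨W, hW, hxW, hyW⟩ := mem_coverEnt.1 (hS ⟨hx, hy⟩)
  exact hZ ⟨W, ⟨hW, hxW⟩, hyW⟩

lemma coverEnt_subset (h : StarRefines C' C) : coverEnt C' ⊆ coverEnt C := by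
  rintro ⟨a, b⟩ hab
  obtain ⟨W, hW, ha, hb⟩ := mem_coverEnt.1 hab
  obtain ⟨Z, hZC, hWZ⟩ :=
    h.exists_subset_of_prod_self_subset (prod_self_subset_coverEnt hW) ha
  exact mem_coverEnt.2 ⟨Z, hZC, hWZ ha, hWZ hb⟩

lemma coverEnt_trans (h : StarRefines C' C) {a b c : X}
    (hab : (a, b) ∈ coverEnt C') (hbc : (b, c) ∈ coverEnt C') : (a, c) ∈ coverEnt C := by
  obtain ⟨W₁, hW₁, ha, hb₁⟩ := mem_coverEnt.1 hab
  obtain ⟨W₂, hW₂, hb₂, hc⟩ := mem_coverEnt.1 hbc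
  obtain ⟨Z, hZC, hZ⟩ := h b
  exact mem_coverEnt.2 ⟨Z, hZC, hZ ⟨W₁, ⟨hW₁, hb₁⟩, ha⟩, hZ ⟨W₂, ⟨hW₂, hb₂⟩, hc⟩⟩

lemma image_prod_self_subset (h₂ : StarRefines C'' C') (h₁ : StarRefines C' C) {A : Set X}
    (hA : A ×ˢ A ⊆ coverEnt C'') :
    SetRel.image (coverEnt C'') A ×ˢ SetRel.image (coverEnt C'') A ⊆ coverEnt C := by
  rintro ⟨a, b⟩ ⟨⟨x, hx, hxa⟩, ⟨y, hy, hyb⟩⟩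
  have hay : (a, y) ∈ coverEnt C' := h₂.coverEnt_trans (coverEnt_symm hxa) (hA ⟨hx, hy⟩)
  exact h₁.coverEnt_trans hay (h₂.coverEnt_subset hyb)

end StarRefines

lemma cauchyB_nhds [TopologicalSpace X] (hBopen : ∀ Y ∈ B, IsOpen Y) (x : X) :
    CauchyB B (𝓝 x) := by
  refine ⟨nhds_neBot, fun C hC => ?_⟩
  obtain ⟨W, hW, hxW⟩ := hC.exists_mem x
  exact ⟨W, (hBopen W (hC.1 hW)).mem_nhds hxW, prod_self_subset_coverEnt hW⟩

include hBII in
lemma CauchyB.exists_mem_cover {F : Filter X} (hF : CauchyB B F) {C : Finset (Set X)}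
    (hC : IsCover B C) : ∃ Z ∈ C, Z ∈ F := by
  obtain ⟨C', hC', hC'C⟩ := hBII C hC
  obtain ⟨A, hA, hAsmall⟩ := hF.2 C' hC'
  obtain ⟨x, hx⟩ := hF.1.nonempty_of_mem hA
  obtain ⟨Z, hZC, hAZ⟩ := hC'C.exists_subset_of_prod_self_subset hAsmall hx
  exact ⟨Z, hZC, mem_of_superset hA hAZ⟩

def minCauchyOf (B : Set (Set X)) (H : Filter X) : Filter X :=
  ⨅ (p : Finset (Set X) × Set X) (_ : IsCover B p.1 ∧ p.2 ∈ H),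
    𝓟 (SetRel.image (coverEnt p.1) p.2)

section minCauchyOf

variable {H : Filter X}

lemma image_coverEnt_mem_minCauchyOf {C : Finset (Set X)} {A : Set X} (hC : IsCover B C)
    (hA : A ∈ H) : SetRel.image (coverEnt C) A ∈ minCauchyOf B H :=
  mem_iInf_of_mem (C, A) (mem_iInf_of_mem ⟨hC, hA⟩ (mem_principal_self _))

lemma le_minCauchyOf (H : Filter X) : H ≤ minCauchyOf B H :=
  le_iInf₂ fun _ hp => le_principal_iff.2 (mem_of_superset hp.2 (hp.1.subset_image_coverEnt _))

include hBI hcov in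
lemma minCauchyOf_hasBasis (H : Filter X) :
    (minCauchyOf B H).HasBasis (fun p : Finset (Set X) × Set X => IsCover B p.1 ∧ p.2 ∈ H)
      fun p => SetRel.image (coverEnt p.1) p.2 := by
  refine hasBasis_biInf_principal' (fun p hp q hq => ?_) ?_
  · obtain ⟨C, hC, hCpq⟩ := hp.1.exists_coverEnt_subset_inter hBI hq.1
    refine ⟨(C, p.2 ∩ q.2), ⟨hC, inter_mem hp.2 hq.2⟩, ?_, ?_⟩
    · exact SetRel.image_subset_image_left (hCpq.trans inter_subset_left) |>.trans
        (SetRel.image_subset_image inter_subset_left)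
    · exact SetRel.image_subset_image_left (hCpq.trans inter_subset_right) |>.trans
        (SetRel.image_subset_image inter_subset_right)
  · obtain ⟨C, hC⟩ := hcov
    exact ⟨(C, univ), hC, univ_mem⟩

include hBII

lemma cauchyB_minCauchyOf (hH : CauchyB B H) : CauchyB B (minCauchyOf B H) := by
  refine ⟨hH.1.mono (le_minCauchyOf H), fun C hC => ?_⟩
  obtain ⟨C', hC', hC'C⟩ := hBII C hC
  obtain ⟨C'', hC'', hC''C'⟩ := hBII C' hC'
  obtain ⟨A, hA, hAsmall⟩ := hH.2 C'' hC''
  exact ⟨_, image_coverEnt_mem_minCauchyOf hC'' hA,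
    hC''C'.image_prod_self_subset hC'C hAsmall⟩

/-- A Cauchy filter `G` meeting `H` contains every `V(C)[A]`, `A ∈ H`, since a `V(C')`-small
element of `G` meets `A` and `C'` star-refines `C`. -/
lemma le_minCauchyOf_of_neBot_inf {G : Filter X} (hG : CauchyB B G) (hGH : (G ⊓ H).NeBot) :
    G ≤ minCauchyOf B H := by
  refine le_iInf₂ fun ⟨C, A⟩ ⟨hC, hA⟩ => le_principal_iff.2 ?_
  obtain ⟨C', hC', hC'C⟩ := hBII C hC
  obtain ⟨S, hSG, hSsmall⟩ := hG.2 C' hC'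
  obtain ⟨x, hxS, hxA⟩ := hGH.nonempty_of_mem (inter_mem_inf hSG hA)
  obtain ⟨Z, hZC, hSZ⟩ := hC'C.exists_subset_of_prod_self_subset hSsmall hxS
  exact mem_of_superset hSG fun y hy => ⟨x, hxA, mem_coverEnt.2 ⟨Z, hZC, hSZ hxS, hSZ hy⟩⟩

lemma minCauchyB_minCauchyOf (hH : CauchyB B H) : MinCauchyB B (minCauchyOf B H) := by
  refine ⟨cauchyB_minCauchyOf hBII hH, fun G hG hle => le_antisymm ?_ hle⟩
  have hGH : G ⊓ H = H := inf_eq_right.2 ((le_minCauchyOf H).trans hle)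
  exact le_minCauchyOf_of_neBot_inf hBII hG (by rw [hGH]; exact hH.1)

lemma MinCauchyB.minCauchyOf_eq {F : Filter X} (hF : MinCauchyB B F) : minCauchyOf B F = F :=
  hF.2 _ (cauchyB_minCauchyOf hBII hF.1) (le_minCauchyOf F)

end minCauchyOf

include hBI hBII hcov in
lemma MinCauchyB.exists_image_coverEnt_subset {F : Filter X} (hF : MinCauchyB B F)
    {Y : Set X} (hY : Y ∈ F) :
    ∃ C A, IsCover B C ∧ A ∈ F ∧ SetRel.image (coverEnt C) A ⊆ Y := by
  rw [← hF.minCauchyOf_eq hBII, (minCauchyOf_hasBasis hBI hcov F).mem_iff] at hY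
  obtain ⟨⟨C, A⟩, ⟨hC, hA⟩, hCAY⟩ := hY
  exact ⟨C, A, hC, hA, hCAY⟩

def hatBall (F : Xhat B) (C : Finset (Set X)) : Set (Xhat B) :=
  {F' | ∃ Y ∈ F.1, Y ∈ F'.1 ∧ Y ×ˢ Y ⊆ coverEnt C}

lemma hatSet_subset_hatBall {F : Xhat B} {C : Finset (Set X)} {Z : Set X} (hZC : Z ∈ C)
    (hZF : Z ∈ F.1) : hatSet B Z ⊆ hatBall F C :=
  fun _ hF' => ⟨Z, hZF, hF', prod_self_subset_coverEnt hZC⟩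

include hBI hcov in
lemma hatNhds_hasBasis (F : Xhat B) : (hatNhds B F).HasBasis (IsCover B) (hatBall F) := by
  have hgen : hatNhds B F = generate (hatBall F '' {C | IsCover B C}) :=
    congrArg generate (by ext S; simp [hatBall, eq_comm])
  rw [hgen, generate_eq_biInf, iInf_image]
  refine hasBasis_biInf_principal' (fun C₁ h₁ C₂ h₂ => ?_) hcov
  obtain ⟨C, hC, hCsub⟩ := h₁.exists_coverEnt_subset_inter hBI h₂
  refine ⟨C, hC, ?_, ?_⟩ <;> rintro F' ⟨Y, hYF, hYF', hY⟩
  exacts [⟨Y, hYF, hYF', hY.trans (hCsub.trans inter_subset_left)⟩,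
    ⟨Y, hYF, hYF', hY.trans (hCsub.trans inter_subset_right)⟩]

include hBI hcov in
lemma isOpen_hatTop_iff {U : Set (Xhat B)} :
    IsOpen[hatTop B] U ↔ ∀ F ∈ U, ∃ C, IsCover B C ∧ hatBall F C ⊆ U :=
  forall₂_congr fun F _ => (hatNhds_hasBasis hBI hcov F).mem_iff

include hBI hBII hcov in
lemma isOpen_hatSet (Y : Set X) : IsOpen[hatTop B] (hatSet B Y) := by
  refine (isOpen_hatTop_iff hBI hcov).2 fun F hFY => ?_
  obtain ⟨C, A, hC, hA, hCAY⟩ := F.2.exists_image_coverEnt_subset hBI hBII hcov hFY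
  obtain ⟨C', hC', hC'C⟩ := hBII C hC
  refine ⟨C', hC', fun F' ⟨Z, hZF, hZF', hZsmall⟩ => mem_of_superset hZF' fun y hy => ?_⟩
  obtain ⟨x, hxZ, hxA⟩ := F.2.1.1.nonempty_of_mem (inter_mem hZF hA)
  obtain ⟨W, hWC, hZW⟩ := hC'C.exists_subset_of_prod_self_subset hZsmall hxZ
  exact hCAY ⟨x, hxA, mem_coverEnt.2 ⟨W, hWC, hZW hxZ, hZW hy⟩⟩

include hBI hBII hcov in
lemma mem_closure_hatImg_iff [t : TopologicalSpace X] (hBopen : ∀ Y ∈ B, IsOpen Y)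
    {Y' : Set X} {F : Xhat B} :
    F ∈ closure[hatTop B] (hatImg t B Y') ↔ ∃ᶠ x in F.1, x ∈ Y' := by
  rw [@mem_closure_iff _ (hatTop B)]
  constructor
  · intro h
    by_contra hY'
    rw [not_frequently] at hY'
    obtain ⟨G, hGY', x, hx, hxG⟩ := h _ (isOpen_hatSet hBI hBII hcov Y'ᶜ) hY'
    exact mem_of_mem_nhds (hxG hGY') hx
  · intro h U hU hFU
    obtain ⟨C, hC, hCU⟩ := (isOpen_hatTop_iff hBI hcov).1 hU F hFU
    obtain ⟨C', hC', hC'C⟩ := hBII C hC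
    obtain ⟨C'', hC'', hC''C'⟩ := hBII C' hC'
    obtain ⟨A, hAF, hAsmall⟩ := F.2.1.2 C'' hC''
    obtain ⟨x, hxA, hxY'⟩ := frequently_iff.1 h hAF
    obtain ⟨W, hWC, hxW⟩ := hC''.exists_mem x
    let G : Xhat B := ⟨minCauchyOf B (𝓝 x), minCauchyB_minCauchyOf hBII (cauchyB_nhds hBopen x)⟩
    have hWF : SetRel.image (coverEnt C'') W ∈ F.1 :=
      mem_of_superset hAF fun a ha => ⟨x, hxW, hAsmall ⟨hxA, ha⟩⟩
    have hWG : SetRel.image (coverEnt C'') W ∈ G.1 :=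
      image_coverEnt_mem_minCauchyOf hC'' ((hBopen W (hC''.1 hWC)).mem_nhds hxW)
    refine ⟨G, hCU ⟨_, hWF, hWG, ?_⟩, x, hxY', le_minCauchyOf _⟩
    exact hC''C'.image_prod_self_subset hC'C (prod_self_subset_coverEnt hWC)

end

/-- With `X̂` the Hausdorff completion of `X` for the uniformity of finite covers by a
family `B` of open sets satisfying (B_I) and (B_II): if `Y` and `Y'` are complementary
subsets of `X`, then `Ŷ = {F ∈ X̂ : Y ∈ F}` and the closure of `Y'` in `X̂` are
complementary subsets of `X̂`; in particular `Ŷ` is open in `X̂`.  Moreover the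
collection `{Ŷ : Y ∈ B}` is a basis of the topology of `X̂`. -/
theorem stmt10 {X : Type*} (t : TopologicalSpace X) (B : Set (Set X))
    (hBopen : ∀ Y ∈ B, @IsOpen X t Y)
    (hBI : ∀ S : Finset (Set X), S.Nonempty → ↑S ⊆ B →
      (⋂₀ (↑S : Set (Set X))).Nonempty → ⋂₀ (↑S : Set (Set X)) ∈ B)
    (hBII : ∀ C : Finset (Set X), IsCover B C → ∃ C' : Finset (Set X), IsCover B C' ∧
      ∀ x : X, ∃ Z ∈ C, ⋃₀ {Y | Y ∈ C' ∧ x ∈ Y} ⊆ Z)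
    (hcov : ∃ C : Finset (Set X), IsCover B C) :
    (∀ Y Y' : Set X, Y' = Yᶜ →
      hatSet B Y = (@closure (Xhat B) (hatTop B) (hatImg t B Y'))ᶜ ∧
      @IsOpen (Xhat B) (hatTop B) (hatSet B Y)) ∧
    @TopologicalSpace.IsTopologicalBasis (Xhat B) (hatTop B)
      {S : Set (Xhat B) | ∃ Y ∈ B, S = hatSet B Y} := by
  refine ⟨fun Y Y' hY' => ⟨?_, isOpen_hatSet hBI hBII hcov Y⟩, ?_⟩
  · ext F
    rw [Set.mem_compl_iff, mem_closure_hatImg_iff hBI hBII hcov hBopen, hY',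
      Filter.not_frequently]
    simp [hatSet, Filter.Eventually]
  · refine @TopologicalSpace.isTopologicalBasis_of_isOpen_of_nhds _ (hatTop B) _
      (fun _ ⟨Y, _, hY⟩ => hY ▸ isOpen_hatSet hBI hBII hcov Y) fun F U hFU hU => ?_
    obtain ⟨C, hC, hCU⟩ := (isOpen_hatTop_iff hBI hcov).1 hU F hFU
    obtain ⟨Z, hZC, hZF⟩ := F.2.1.exists_mem_cover hBII hC
    exact ⟨hatSet B Z, ⟨Z, hC.1 hZC, rfl⟩, hZF, (hatSet_subset_hatBall hZC hZF).trans hCU⟩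
end

section
/- Let (X, d) be a complete ultrametric space with diameter set I = [0, diam X] (or [0,∞)). On X × I, the relation (x,r) ~ (x',r') iff r = r' and r ≥ d(x,x') is an equivalence relation, and the function δ([x,r],[x',r']) = max{r, r', d(x,x')} − (r + r')/2 is a well-defined metric on the quotient A = (X × I)/~ whose restriction to X × {0} ≅ X coincides with d. -/
/-- The space `X × I`, where `I = [0, diam X]` (or `[0, ∞)` if `X` is unbounded). -/
def XI (X : Type*) [MetricSpace X] : Type _ :=
  {p : X × ℝ // 0 ≤ p.2 ∧ ENNReal.ofReal p.2 ≤ EMetric.diam (Set.univ : Set X)}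

/-- The relation `(x, r) ~ (x', r')` iff `r = r'` and `r ≥ d(x, x')`. -/
def relXI {X : Type*} [MetricSpace X] (p q : XI X) : Prop :=
  p.1.2 = q.1.2 ∧ dist p.1.1 q.1.1 ≤ p.1.2

/-- `δ([x,r], [x',r']) = max {r, r', d(x,x')} − (r + r')/2`. -/
noncomputable def deltaXI {X : Type*} [MetricSpace X] (p q : XI X) : ℝ :=
  max (max p.1.2 q.1.2) (dist p.1.1 q.1.1) - (p.1.2 + q.1.2) / 2

/-- The embedding `x ↦ (x, 0)` of `X` into `X × I`. -/
def embXI {X : Type*} [MetricSpace X] (x : X) : XI X :=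
  ⟨(x, 0), le_refl 0, by simp⟩

lemma ultra_aux {X : Type*} [MetricSpace X] [IsUltrametricDist X]
    (xp xp' xq xq' : X) (rp rq : ℝ) (hp : dist xp xp' ≤ rp) (hq : dist xq xq' ≤ rq) :
    dist xp xq ≤ max (max rp rq) (dist xp' xq') := by
  have hq' : dist xq' xq ≤ rq := by rw [dist_comm]; exact hq
  calc dist xp xq ≤ max (dist xp xp') (dist xp' xq) :=
        IsUltrametricDist.dist_triangle_max xp xp' xq
    _ ≤ max rp (max (dist xp' xq') rq) := by
        exact max_le_max hp ((IsUltrametricDist.dist_triangle_max xp' xq' xq).trans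
          (max_le_max le_rfl hq'))
    _ ≤ max (max rp rq) (dist xp' xq') := by
        apply max_le (le_max_of_le_left (le_max_left _ _))
        exact max_le (le_max_right _ _) (le_max_of_le_left (le_max_right _ _))

/-- Let `(X, d)` be a complete ultrametric space.  On `X × I` the relation
`(x,r) ~ (x',r')` iff `r = r'` and `r ≥ d(x,x')` is an equivalence relation, and
`δ((x,r),(x',r')) = max {r, r', d(x,x')} − (r + r')/2` is well defined on the quotient
`(X × I)/~` and is a metric there (nonnegative, vanishing exactly on the relation,
symmetric, triangle inequality), whose restriction to `X × {0} ≅ X` coincides with `d`. -/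
theorem stmt11 {X : Type*} [MetricSpace X] [CompleteSpace X] [IsUltrametricDist X] :
    Equivalence (relXI (X := X)) ∧
    (∀ p p' q q' : XI X, relXI p p' → relXI q q' → deltaXI p q = deltaXI p' q') ∧
    (∀ p q : XI X, 0 ≤ deltaXI p q) ∧
    (∀ p q : XI X, (deltaXI p q = 0 ↔ relXI p q)) ∧
    (∀ p q : XI X, deltaXI p q = deltaXI q p) ∧
    (∀ p q s : XI X, deltaXI p s ≤ deltaXI p q + deltaXI q s) ∧
    (∀ x y : X, deltaXI (embXI x) (embXI y) = dist x y) := by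
  have symm : ∀ p q : XI X, relXI p q → relXI q p := by
    rintro p q ⟨h1, h2⟩
    exact ⟨h1.symm, by rw [dist_comm, ← h1]; exact h2⟩
  refine ⟨⟨?_, fun {p q} h => symm p q h, ?_⟩, ?_, ?_, ?_, ?_, ?_, ?_⟩
  · intro p; exact ⟨rfl, by simpa using p.2.1⟩
  · rintro p q s ⟨h1, h2⟩ ⟨h3, h4⟩
    refine ⟨h1.trans h3, ?_⟩
    calc dist p.1.1 s.1.1 ≤ max (dist p.1.1 q.1.1) (dist q.1.1 s.1.1) :=
          IsUltrametricDist.dist_triangle_max _ _ _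
      _ ≤ p.1.2 := max_le h2 (h4.trans h1.ge)
  · rintro p p' q q' hp hq
    obtain ⟨hp1, hp2⟩ := hp
    obtain ⟨hq1, hq2⟩ := hq
    obtain ⟨hp1', hp2'⟩ := symm _ _ ⟨hp1, hp2⟩
    obtain ⟨hq1', hq2'⟩ := symm _ _ ⟨hq1, hq2⟩
    unfold deltaXI
    rw [← hp1, ← hq1]
    congr 1
    apply le_antisymm
    · exact max_le (le_max_left _ _) (ultra_aux _ _ _ _ _ _ hp2 hq2)
    · refine max_le (le_max_left _ _) ?_
      exact ultra_aux _ _ _ _ _ _ (hp2'.trans hp1'.le) (hq2'.trans hq1'.le)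
  · intro p q
    unfold deltaXI
    have h1 : p.1.2 ≤ max (max p.1.2 q.1.2) (dist p.1.1 q.1.1) :=
      le_max_of_le_left (le_max_left _ _)
    have h2 : q.1.2 ≤ max (max p.1.2 q.1.2) (dist p.1.1 q.1.1) :=
      le_max_of_le_left (le_max_right _ _)
    linarith
  · intro p q
    unfold deltaXI relXI
    constructor
    · intro h
      have h1 : p.1.2 ≤ max (max p.1.2 q.1.2) (dist p.1.1 q.1.1) :=
        le_max_of_le_left (le_max_left _ _)
      have h2 : q.1.2 ≤ max (max p.1.2 q.1.2) (dist p.1.1 q.1.1) :=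
        le_max_of_le_left (le_max_right _ _)
      have h3 : dist p.1.1 q.1.1 ≤ max (max p.1.2 q.1.2) (dist p.1.1 q.1.1) :=
        le_max_right _ _
      constructor <;> linarith
    · rintro ⟨h1, h2⟩
      have : max (max p.1.2 q.1.2) (dist p.1.1 q.1.1) = p.1.2 := by
        rw [← h1, max_self, max_eq_left h2]
      rw [this, ← h1]; ring
  · intro p q
    unfold deltaXI
    rw [dist_comm, max_comm p.1.2, add_comm p.1.2]
  · intro p q s
    unfold deltaXI
    set Mpq := max (max p.1.2 q.1.2) (dist p.1.1 q.1.1) with hMpq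
    set Mqs := max (max q.1.2 s.1.2) (dist q.1.1 s.1.1) with hMqs
    have hq1 : q.1.2 ≤ Mpq := le_max_of_le_left (le_max_right _ _)
    have hq2 : q.1.2 ≤ Mqs := le_max_of_le_left (le_max_left _ _)
    have hps : max (max p.1.2 s.1.2) (dist p.1.1 s.1.1) ≤ max Mpq Mqs := by
      refine max_le (max_le ?_ ?_) ?_
      · exact le_max_of_le_left (le_max_of_le_left (le_max_left _ _))
      · exact le_max_of_le_right (le_max_of_le_left (le_max_right _ _))
      · exact (IsUltrametricDist.dist_triangle_max _ _ _).trans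
          (max_le_max (le_max_right _ _) (le_max_right _ _))
    rcases le_total Mpq Mqs with h | h
    · rw [max_eq_right h] at hps; linarith
    · rw [max_eq_left h] at hps; linarith
  · intro x y
    unfold deltaXI embXI
    simp [max_eq_right dist_nonneg]
end
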